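/- In a local Moufang set, the little projective group decomposes as the disjoint union G = U_0 G_{0,∞} U_∞ ∪ U_0 G_{0,∞} τ U_0°, where G_{0,∞} is the stabilizer of both 0 and ∞, τ is a fixed μ-map, and U_0° is the kernel of U_0 acting on equivalence classes; moreover the expression of any g in either piece as such a product is unique. -/

import Mathlib

open Equiv

structure LocalMoufangSet (X : Type*) where
  r : X → X → Prop
  requiv : Equivalence r
  U : X → Subgroup (Equiv.Perm X)
  preserves : ∀ x : X, ∀ u ∈ U x, ∀ a b : X, r a b ↔ r (u a) (u b)
  big : ∃ a b c : X, ¬ r a b ∧ ¬ r b c ∧ ¬ r a c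
  lm1 : ∀ x y : X, r x y → ∀ u ∈ U x, ∃ v ∈ U y, ∀ z : X, r (u z) (v z)
  lm2_fix : ∀ x : X, ∀ u ∈ U x, u x = x
  lm2_trans : ∀ x y z : X, ¬ r y x → ¬ r z x → ∃! u : Equiv.Perm X, u ∈ U x ∧ u y = z
  lm2'_trans : ∀ x y z : X, ¬ r y x → ¬ r z x → ∃ u ∈ U x, r (u y) z
  lm2'_free : ∀ x : X, ∀ u ∈ U x, ∀ y : X, ¬ r y x → r (u y) y → ∀ z : X, r (u z) z
  lm3 : ∀ x : X, ∀ g ∈ (⨆ y : X, U y : Subgroup (Equiv.Perm X)),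
      (U x).map (MulAut.conj g).toMonoidHom = U (g x)

namespace LocalMoufangSet

variable {X : Type*} (M : LocalMoufangSet X)

/-- The little projective group. -/
def G : Subgroup (Equiv.Perm X) := ⨆ x : X, M.U x

/-- `x` is a unit with respect to the base points `o` (zero) and `ι` (infinity). -/
def IsUnitPt (o ι x : X) : Prop := ¬ M.r x o ∧ ¬ M.r x ι

/-- `μ` is the μ-map of `x`: it lies in the double coset `U_0 α_x U_0` and swaps `o` and `ι`.
(We use the left-action convention: a right product `g α h` corresponds to `h * α * g`.) -/
def IsMuMap (o ι x : X) (μ : Equiv.Perm X) : Prop :=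
  μ o = ι ∧ μ ι = o ∧
    ∃ a ∈ M.U ι, a o = x ∧ ∃ g ∈ M.U o, ∃ h ∈ M.U o, μ = h * a * g

/-- Specialness with respect to a μ-map `τ`: `(-x)τ = -(xτ)` for all units `x`. -/
def Special (o ι : X) (τ : Equiv.Perm X) : Prop :=
  ∀ z : X, IsUnitPt M o ι z → ∀ a ∈ M.U ι, a o = z → ∀ b ∈ M.U ι, b o = τ z →
    τ (a⁻¹ o) = b⁻¹ o

end LocalMoufangSet

/-!
Every `g ∈ G` is sorted by the class of `g 0`. If `g 0 ≁ ∞`, a root element `b ∈ U_∞` with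
`b 0 = g 0` reduces `g` to the stabilizer of `0`; if `g 0 ∼ ∞`, a root element `c ∈ U_0` with
`c ∞ = g 0` does, after applying `τ⁻¹`, and `c ∈ U_0°` because it moves `∞` inside its class.
The stabilizer of `0` in `G` is `G_{0,∞} U_0`, since `U_0` is sharply transitive on the points
not equivalent to `0`. The class of `g 0` also separates the two pieces, and sharp transitivity
of root groups gives the uniqueness of the factors.
-/

namespace LocalMoufangSet

variable {X : Type*} (M : LocalMoufangSet X)

theorem mem_G_of_mem_U {x : X} {u : Perm X} (hu : u ∈ M.U x) : u ∈ M.G :=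
  Subgroup.mem_iSup_of_mem x hu

theorem mem_G_of_isMuMap {o ι x : X} {μ : Perm X} (hμ : M.IsMuMap o ι x μ) : μ ∈ M.G := by
  obtain ⟨-, -, a, ha, -, g, hg, h, hh, rfl⟩ := hμ
  exact mul_mem (mul_mem (M.mem_G_of_mem_U hh) (M.mem_G_of_mem_U ha)) (M.mem_G_of_mem_U hg)

theorem r_iff_r_apply_of_mem_G {g : Perm X} (hg : g ∈ M.G) (y z : X) :
    M.r y z ↔ M.r (g y) (g z) := by
  refine Subgroup.iSup_induction M.U (C := fun g => ∀ y z, M.r y z ↔ M.r (g y) (g z)) hg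
    (fun x u hu => M.preserves x u hu) (fun _ _ => Iff.rfl) (fun u v hu hv y z => ?_) y z
  rw [hv, hu]
  rfl

theorem r_apply_iff_of_apply_eq_self {g : Perm X} (hg : g ∈ M.G) {x : X} (hgx : g x = x)
    (y : X) : M.r (g y) x ↔ M.r y x := by
  rw [M.r_iff_r_apply_of_mem_G hg y x, hgx]

theorem inv_apply_self_of_mem_U {x : X} {u : Perm X} (hu : u ∈ M.U x) : u⁻¹ x = x :=
  M.lm2_fix x u⁻¹ (inv_mem hu)

theorem exists_mem_U_apply_eq {x y z : X} (hy : ¬ M.r y x) (hz : ¬ M.r z x) :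
    ∃ u ∈ M.U x, u y = z :=
  (M.lm2_trans x y z hy hz).exists

theorem eq_of_mem_U_of_apply_eq {x y : X} {u v : Perm X} (hu : u ∈ M.U x) (hv : v ∈ M.U x)
    (hy : ¬ M.r y x) (huv : u y = v y) : u = v := by
  have huy : ¬ M.r (u y) x := by
    rwa [M.r_apply_iff_of_apply_eq_self (M.mem_G_of_mem_U hu) (M.lm2_fix x u hu)]
  exact (M.lm2_trans x y (u y) hy huy).unique ⟨hu, rfl⟩ ⟨hv, huv.symm⟩

/-- `G_0 = G_{0,∞} U_0`. -/
theorem exists_eq_mul_of_apply_eq_self {o ι : X} (h0 : ¬ M.r o ι) {k : Perm X} (hk : k ∈ M.G)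
    (hko : k o = o) :
    ∃ a ∈ M.U o, ∃ h ∈ M.G, h o = o ∧ h ι = ι ∧ k = h * a := by
  have hkι : ¬ M.r (k⁻¹ ι) o := by
    rw [← M.r_apply_iff_of_apply_eq_self hk hko, ← Perm.mul_apply, mul_inv_cancel, Perm.one_apply]
    exact mt M.requiv.symm h0
  obtain ⟨a, ha, haι⟩ := M.exists_mem_U_apply_eq hkι (mt M.requiv.symm h0)
  refine ⟨a, ha, k * a⁻¹, mul_mem hk (inv_mem (M.mem_G_of_mem_U ha)), ?_, ?_, by group⟩
  · rw [Perm.mul_apply, M.inv_apply_self_of_mem_U ha, hko]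
  · rw [Perm.mul_apply, Perm.inv_eq_iff_eq.mpr haι.symm, ← Perm.mul_apply, mul_inv_cancel,
      Perm.one_apply]

theorem eq_and_eq_of_mul_eq_mul {o ι : X} (h0 : ¬ M.r o ι) {a a' h h' : Perm X}
    (ha : a ∈ M.U o) (ha' : a' ∈ M.U o) (hι : h ι = ι) (h'ι : h' ι = ι)
    (heq : h * a = h' * a') : a = a' ∧ h = h' := by
  have hinv : a⁻¹ ι = a'⁻¹ ι := by
    have := congrArg (fun k : Perm X => k⁻¹ ι) heq
    simpa [Perm.mul_apply, Perm.inv_eq_iff_eq.mpr hι.symm,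
      Perm.inv_eq_iff_eq.mpr h'ι.symm] using this
  have haa' : a = a' := inv_injective <|
    M.eq_of_mem_U_of_apply_eq (inv_mem ha) (inv_mem ha') (mt M.requiv.symm h0) hinv
  subst haa'
  exact ⟨rfl, mul_right_cancel heq⟩

section Decomposition

variable {M} {o ι : X} {τ : Perm X}

theorem r_apply_self_of_mem_U_of_r (h0 : ¬ M.r o ι) {c : Perm X} (hc : c ∈ M.U o)
    (hcι : M.r (c ι) ι) (z : X) : M.r (c z) z :=
  M.lm2'_free o c hc ι (mt M.requiv.symm h0) hcι z

theorem exists_decomp_of_not_r_apply (h0 : ¬ M.r o ι) {g : Perm X} (hg : g ∈ M.G)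
    (hgo : ¬ M.r (g o) ι) :
    ∃ a ∈ M.U o, ∃ h ∈ M.G, h o = o ∧ h ι = ι ∧ ∃ b ∈ M.U ι, g = b * h * a := by
  obtain ⟨b, hb, hbo⟩ := M.exists_mem_U_apply_eq h0 hgo
  have hko : (b⁻¹ * g) o = o := by
    rw [Perm.mul_apply, Perm.inv_eq_iff_eq, hbo]
  obtain ⟨a, ha, h, hh, hho, hhι, hk⟩ := M.exists_eq_mul_of_apply_eq_self h0
    (mul_mem (inv_mem (M.mem_G_of_mem_U hb)) hg) hko
  exact ⟨a, ha, h, hh, hho, hhι, b, hb, by rw [mul_assoc, ← hk]; group⟩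

theorem exists_decomp_of_r_apply (h0 : ¬ M.r o ι) (hτG : τ ∈ M.G) (hτo : τ o = ι) {g : Perm X}
    (hg : g ∈ M.G) (hgo : M.r (g o) ι) :
    ∃ a ∈ M.U o, ∃ h ∈ M.G, h o = o ∧ h ι = ι ∧
      ∃ c ∈ M.U o, (∀ z : X, M.r (c z) z) ∧ g = c * τ * h * a := by
  have hgo' : ¬ M.r (g o) o := fun h => h0 (M.requiv.trans (M.requiv.symm h) hgo)
  obtain ⟨c, hc, hcι⟩ := M.exists_mem_U_apply_eq (mt M.requiv.symm h0) hgo'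
  have hko : (τ⁻¹ * c⁻¹ * g) o = o := by
    rw [Perm.mul_apply, Perm.mul_apply, Perm.inv_eq_iff_eq, Perm.inv_eq_iff_eq, hτo, hcι]
  obtain ⟨a, ha, h, hh, hho, hhι, hk⟩ := M.exists_eq_mul_of_apply_eq_self h0
    (mul_mem (mul_mem (inv_mem hτG) (inv_mem (M.mem_G_of_mem_U hc))) hg) hko
  refine ⟨a, ha, h, hh, hho, hhι, c, hc, r_apply_self_of_mem_U_of_r h0 hc (hcι ▸ hgo), ?_⟩
  rw [mul_assoc _ h, ← hk]
  group

theorem factors_eq_of_mul_mul_eq (h0 : ¬ M.r o ι) {a a' h h' b b' : Perm X}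
    (ha : a ∈ M.U o) (ha' : a' ∈ M.U o) (hho : h o = o) (hhι : h ι = ι) (h'o : h' o = o)
    (h'ι : h' ι = ι) (hb : b ∈ M.U ι) (hb' : b' ∈ M.U ι) (heq : b * h * a = b' * h' * a') :
    a = a' ∧ h = h' ∧ b = b' := by
  have hbb' : b = b' := by
    refine M.eq_of_mem_U_of_apply_eq hb hb' h0 ?_
    simpa [Perm.mul_apply, M.lm2_fix o a ha, M.lm2_fix o a' ha', hho, h'o] using
      congrArg (· o) heq
  subst hbb'
  rw [mul_assoc, mul_assoc] at heq
  obtain ⟨rfl, rfl⟩ := M.eq_and_eq_of_mul_eq_mul h0 ha ha' hhι h'ι (mul_left_cancel heq)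
  exact ⟨rfl, rfl, rfl⟩

theorem factors_eq_of_mul_mul_mul_eq (h0 : ¬ M.r o ι) (hτo : τ o = ι) {a a' h h' c c' : Perm X}
    (ha : a ∈ M.U o) (ha' : a' ∈ M.U o) (hho : h o = o) (hhι : h ι = ι) (h'o : h' o = o)
    (h'ι : h' ι = ι) (hc : c ∈ M.U o) (hc' : c' ∈ M.U o)
    (heq : c * τ * h * a = c' * τ * h' * a') : a = a' ∧ h = h' ∧ c = c' := by
  have hcc' : c = c' := by
    refine M.eq_of_mem_U_of_apply_eq hc hc' (mt M.requiv.symm h0) ?_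
    simpa [Perm.mul_apply, M.lm2_fix o a ha, M.lm2_fix o a' ha', hho, h'o, hτo] using
      congrArg (· o) heq
  subst hcc'
  simp only [mul_assoc] at heq
  obtain ⟨rfl, rfl⟩ :=
    M.eq_and_eq_of_mul_eq_mul h0 ha ha' hhι h'ι (mul_left_cancel (mul_left_cancel heq))
  exact ⟨rfl, rfl, rfl⟩

end Decomposition

end LocalMoufangSet

open LocalMoufangSet

/-- Left-action convention: the right product `u_0 h u_∞` is `u_∞ * h * u_0` and
`u_0 h τ u_0°` is `u_0° * τ * h * u_0`; `U_0°` consists of the `c ∈ U_0` with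
`r (c z) z` for all `z`. -/
theorem stmt9_general {X : Type*} (M : LocalMoufangSet X) (o ι : X) (h0 : ¬ M.r o ι)
    (e : X)
    (τ : Equiv.Perm X) (hτ : M.IsMuMap o ι e τ) :
    (∀ g ∈ M.G,
      (∃ a ∈ M.U o, ∃ h ∈ M.G, h o = o ∧ h ι = ι ∧ ∃ b ∈ M.U ι, g = b * h * a) ∨
      (∃ a ∈ M.U o, ∃ h ∈ M.G, h o = o ∧ h ι = ι ∧
        ∃ c ∈ M.U o, (∀ z : X, M.r (c z) z) ∧ g = c * τ * h * a)) ∧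
    (∀ g : Equiv.Perm X,
      ¬ ((∃ a ∈ M.U o, ∃ h ∈ M.G, h o = o ∧ h ι = ι ∧ ∃ b ∈ M.U ι, g = b * h * a) ∧
         (∃ a ∈ M.U o, ∃ h ∈ M.G, h o = o ∧ h ι = ι ∧
           ∃ c ∈ M.U o, (∀ z : X, M.r (c z) z) ∧ g = c * τ * h * a))) ∧
    (∀ a a' h h' b b' : Equiv.Perm X,
      a ∈ M.U o → a' ∈ M.U o → h ∈ M.G → h' ∈ M.G →
      h o = o → h ι = ι → h' o = o → h' ι = ι → b ∈ M.U ι → b' ∈ M.U ι →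
      b * h * a = b' * h' * a' → a = a' ∧ h = h' ∧ b = b') ∧
    (∀ a a' h h' c c' : Equiv.Perm X,
      a ∈ M.U o → a' ∈ M.U o → h ∈ M.G → h' ∈ M.G →
      h o = o → h ι = ι → h' o = o → h' ι = ι →
      c ∈ M.U o → c' ∈ M.U o → (∀ z : X, M.r (c z) z) → (∀ z : X, M.r (c' z) z) →
      c * τ * h * a = c' * τ * h' * a' → a = a' ∧ h = h' ∧ c = c') := by
  have hτG : τ ∈ M.G := M.mem_G_of_isMuMap hτ
  have hτo : τ o = ι := hτ.1
  refine ⟨fun g hg => ?_, ?_, fun a a' h h' b b' ha ha' _ _ hho hhι h'o h'ι hb hb' heq =>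
    factors_eq_of_mul_mul_eq h0 ha ha' hho hhι h'o h'ι hb hb' heq,
    fun a a' h h' c c' ha ha' _ _ hho hhι h'o h'ι hc hc' _ _ heq =>
    factors_eq_of_mul_mul_mul_eq h0 hτo ha ha' hho hhι h'o h'ι hc hc' heq⟩
  · by_cases hgo : M.r (g o) ι
    · exact .inr (exists_decomp_of_r_apply h0 hτG hτo hg hgo)
    · exact .inl (exists_decomp_of_not_r_apply h0 hg hgo)
  · rintro g ⟨⟨a, ha, h, -, hho, -, b, hb, rfl⟩, ⟨a', ha', h', -, h'o, -, c, -, hc, heq⟩⟩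
    have hbo : b o = c ι := by
      simpa [Perm.mul_apply, M.lm2_fix o a ha, M.lm2_fix o a' ha', hho, h'o, hτo] using
        congrArg (· o) heq
    exact (M.r_apply_iff_of_apply_eq_self (M.mem_G_of_mem_U hb) (M.lm2_fix ι b hb) o).not.mpr h0
      (hbo ▸ hc ι)

/-- the Bruhat-like decomposition
`G = U_0 G_{0,∞} U_∞ ∪ U_0 G_{0,∞} τ U_0°` (disjoint, with unique expressions).
Left-action convention: the right product `u_0 h u_∞` is `u_∞ * h * u_0` and
`u_0 h τ u_0°` is `u_0° * τ * h * u_0`; `U_0°` consists of the `c ∈ U_0` with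
`r (c z) z` for all `z`. -/
theorem stmt9 {X : Type*} (M : LocalMoufangSet X) (o ι : X) (h0 : ¬ M.r o ι)
    (e : X) (he : M.IsUnitPt o ι e)
    (τ : Equiv.Perm X) (hτ : M.IsMuMap o ι e τ) :
    (∀ g ∈ M.G,
      (∃ a ∈ M.U o, ∃ h ∈ M.G, h o = o ∧ h ι = ι ∧ ∃ b ∈ M.U ι, g = b * h * a) ∨
      (∃ a ∈ M.U o, ∃ h ∈ M.G, h o = o ∧ h ι = ι ∧
        ∃ c ∈ M.U o, (∀ z : X, M.r (c z) z) ∧ g = c * τ * h * a)) ∧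
    (∀ g : Equiv.Perm X,
      ¬ ((∃ a ∈ M.U o, ∃ h ∈ M.G, h o = o ∧ h ι = ι ∧ ∃ b ∈ M.U ι, g = b * h * a) ∧
         (∃ a ∈ M.U o, ∃ h ∈ M.G, h o = o ∧ h ι = ι ∧
           ∃ c ∈ M.U o, (∀ z : X, M.r (c z) z) ∧ g = c * τ * h * a))) ∧
    (∀ a a' h h' b b' : Equiv.Perm X,
      a ∈ M.U o → a' ∈ M.U o → h ∈ M.G → h' ∈ M.G →
      h o = o → h ι = ι → h' o = o → h' ι = ι → b ∈ M.U ι → b' ∈ M.U ι →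
      b * h * a = b' * h' * a' → a = a' ∧ h = h' ∧ b = b') ∧
    (∀ a a' h h' c c' : Equiv.Perm X,
      a ∈ M.U o → a' ∈ M.U o → h ∈ M.G → h' ∈ M.G →
      h o = o → h ι = ι → h' o = o → h' ι = ι →
      c ∈ M.U o → c' ∈ M.U o → (∀ z : X, M.r (c z) z) → (∀ z : X, M.r (c' z) z) →
      c * τ * h * a = c' * τ * h' * a' → a = a' ∧ h = h' ∧ c = c') :=
  stmt9_general M o ι h0 e τ hτ
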